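/- arXiv:1206.3070 — 2 statements merged into one kernel-verified Lean document; each statement's English description precedes it below -/
import Mathlib

section
/- Let u : Ω → ℝ be a function on an open set Ω ⊂ ℝⁿ that is convex along the flow lines of each vector field in a family X = {X₁,…,X_m} (X-convex), and suppose u is bounded above on a ball B around x and attains each composed flow point. If x' ∈ B and γ is a flow line of some X_j through x' staying in B, then the reflection inequality 2u(x') - sup_B u ≤ u(γ(t)) holds for all admissible t, and iterating over N successive flow directions yields inf over the reachable set ≥ 2^N u(x') - (2^N - 1) sup_B u. -/
/-- `u` is convex along every integral curve of every constant-coefficient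
combination of the fields `X j`, inside `Ω`. -/
def XConvexOn {n m : ℕ} (X : Fin m → (Fin n → ℝ) → (Fin n → ℝ))
    (Ω : Set (Fin n → ℝ)) (u : (Fin n → ℝ) → ℝ) : Prop :=
  ∀ (α : Fin m → ℝ) (γ : ℝ → (Fin n → ℝ)) (I : Set ℝ), IsOpen I → Convex ℝ I →
    (∀ t ∈ I, γ t ∈ Ω) →
    (∀ t ∈ I, HasDerivAt γ (∑ j, α j • X j (γ t)) t) →
    ConvexOn ℝ I (u ∘ γ)

/-- `Φ j` is the (global) flow of the vector field `X j`. -/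
def IsFlow {n m : ℕ} (X : Fin m → (Fin n → ℝ) → (Fin n → ℝ))
    (Φ : Fin m → ℝ → (Fin n → ℝ) → (Fin n → ℝ)) : Prop :=
  ∀ j x, Φ j 0 x = x ∧ ∀ t : ℝ, HasDerivAt (fun s => Φ j s x) (X j (Φ j t x)) t

/-- The composed flow point `exp(w_{N-1} X_{j_{N-1}}) ∘ ⋯ ∘ exp(w₀ X_{j₀})(x)`. -/
def compPt {n m N : ℕ} (Φ : Fin m → ℝ → (Fin n → ℝ) → (Fin n → ℝ))
    (j : Fin N → Fin m) (w : Fin N → ℝ) (x : Fin n → ℝ) : Fin n → ℝ :=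
  (List.ofFn fun k => (j k, w k)).foldl (fun z p => Φ p.1 p.2 z) x

lemma compPt_zero {n m : ℕ} (Φ : Fin m → ℝ → (Fin n → ℝ) → (Fin n → ℝ))
    (j : Fin 0 → Fin m) (w : Fin 0 → ℝ) (x : Fin n → ℝ) : compPt Φ j w x = x := by
  simp [compPt]

lemma compPt_succ {n m N : ℕ} (Φ : Fin m → ℝ → (Fin n → ℝ) → (Fin n → ℝ))
    (j : Fin (N+1) → Fin m) (w : Fin (N+1) → ℝ) (x : Fin n → ℝ) :
    compPt Φ j w x = Φ (j (Fin.last N)) (w (Fin.last N))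
      (compPt Φ (j ∘ Fin.castSucc) (w ∘ Fin.castSucc) x) := by
  have h : (List.ofFn fun k : Fin (N+1) => (j k, w k)) =
      (List.ofFn fun k : Fin N => (j k.castSucc, w k.castSucc)).concat
        (j (Fin.last N), w (Fin.last N)) := List.ofFn_succ' _
  simp only [compPt, h, Function.comp]
  rw [List.concat_eq_append, List.foldl_append]
  rfl

/-- reflection lemma -/
lemma reflect {n m : ℕ} (X : Fin m → (Fin n → ℝ) → (Fin n → ℝ))
    (Ω : Set (Fin n → ℝ)) (u : (Fin n → ℝ) → ℝ) (hu : XConvexOn X Ω u)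
    (x₀ : Fin n → ℝ) (r : ℝ) (hBΩ : Metric.ball x₀ r ⊆ Ω)
    (hbdd : BddAbove (u '' Metric.ball x₀ r))
    (jj : Fin m) (γ : ℝ → (Fin n → ℝ)) (T : ℝ) (hT : 0 < T)
    (hγ : ∀ t ∈ Set.Ioo (-T) T, HasDerivAt γ (X jj (γ t)) t ∧ γ t ∈ Metric.ball x₀ r) :
    ∀ t ∈ Set.Ioo (-T) T,
      2 * u (γ 0) - sSup (u '' Metric.ball x₀ r) ≤ u (γ t) := by
  have hconv : ConvexOn ℝ (Set.Ioo (-T) T) (u ∘ γ) := by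
    apply hu (fun j' => if j' = jj then 1 else 0) γ _ isOpen_Ioo (convex_Ioo _ _)
    · intro t ht; exact hBΩ (hγ t ht).2
    · intro t ht
      have : (∑ j', (if j' = jj then (1:ℝ) else 0) • X j' (γ t)) = X jj (γ t) := by
        simp [ite_smul]
      rw [this]
      exact (hγ t ht).1
  intro t ht
  have hnt : -t ∈ Set.Ioo (-T) T := by
    constructor <;> [linarith [ht.2]; linarith [ht.1]]
  have h := hconv.2 ht hnt (by norm_num : (0:ℝ) ≤ 1/2) (by norm_num : (0:ℝ) ≤ 1/2)
    (by norm_num)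
  have he : (1/2 : ℝ) • t + (1/2 : ℝ) • (-t) = 0 := by
    simp only [smul_eq_mul]; ring
  rw [he] at h
  simp only [smul_eq_mul, Function.comp] at h
  have hS : u (γ (-t)) ≤ sSup (u '' Metric.ball x₀ r) :=
    le_csSup hbdd ⟨γ (-t), (hγ (-t) hnt).2, rfl⟩
  linarith

/-- Reflection inequality along a flow line and its iteration along `N` successive
flow directions, for an X-convex function bounded above on a ball. -/
theorem stmt_10 {n m : ℕ} (X : Fin m → (Fin n → ℝ) → (Fin n → ℝ))
    (Ω : Set (Fin n → ℝ)) (hΩ : IsOpen Ω) (u : (Fin n → ℝ) → ℝ)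
    (hu : XConvexOn X Ω u)
    (x₀ : Fin n → ℝ) (r : ℝ) (hr : 0 < r) (hBΩ : Metric.ball x₀ r ⊆ Ω)
    (hbdd : BddAbove (u '' Metric.ball x₀ r))
    (x' : Fin n → ℝ) (hx' : x' ∈ Metric.ball x₀ r) :
    (∀ (j : Fin m) (γ : ℝ → (Fin n → ℝ)) (T : ℝ), 0 < T → γ 0 = x' →
      (∀ t ∈ Set.Ioo (-T) T, HasDerivAt γ (X j (γ t)) t ∧ γ t ∈ Metric.ball x₀ r) →
      ∀ t ∈ Set.Ioo (-T) T,
        2 * u x' - sSup (u '' Metric.ball x₀ r) ≤ u (γ t)) ∧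
    (∀ (Φ : Fin m → ℝ → (Fin n → ℝ) → (Fin n → ℝ)), IsFlow X Φ →
      ∀ (N : ℕ) (j : Fin N → Fin m) (c : ℝ), 0 < c →
      (∀ w : Fin N → ℝ, (∀ k, |w k| < c) → compPt Φ j w x' ∈ Metric.ball x₀ r) →
      ∀ w : Fin N → ℝ, (∀ k, |w k| < c) →
        (2:ℝ) ^ N * u x' - ((2:ℝ) ^ N - 1) * sSup (u '' Metric.ball x₀ r)
          ≤ u (compPt Φ j w x')) := by
  set S := sSup (u '' Metric.ball x₀ r) with hSdef
  constructor
  · intro j γ T hT hγ0 hγ t ht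
    have := reflect X Ω u hu x₀ r hBΩ hbdd j γ T hT hγ t ht
    rwa [hγ0] at this
  · intro Φ hΦ N
    induction N with
    | zero =>
        intro j c hc hmem w hw
        rw [compPt_zero]
        norm_num
    | succ N ih =>
        intro j c hc hmem w hw
        set j' : Fin N → Fin m := j ∘ Fin.castSucc with hj'
        set w' : Fin N → ℝ := w ∘ Fin.castSucc with hw'
        set y := compPt Φ j' w' x' with hy
        have hw'lt : ∀ k, |w' k| < c := fun k => hw _
        -- the truncated word stays admissible
        have hmem' : ∀ v : Fin N → ℝ, (∀ k, |v k| < c) →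
            compPt Φ j' v x' ∈ Metric.ball x₀ r := by
          intro v hv
          have : compPt Φ j (Fin.snoc v (0:ℝ) : Fin (N+1) → ℝ) x' = compPt Φ j' v x' := by
            rw [compPt_succ]
            have h1 : (Fin.snoc v (0:ℝ) : Fin (N+1) → ℝ) (Fin.last N) = 0 := by simp
            have h2 : (Fin.snoc v (0:ℝ) : Fin (N+1) → ℝ) ∘ Fin.castSucc = v := by
              funext k; simp
            rw [h1, h2, (hΦ _ _).1]
          rw [← this]
          apply hmem
          intro k
          induction k using Fin.lastCases with
          | last => simpa using hc
          | cast k => simpa using hv k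
        have hyIH : (2:ℝ) ^ N * u x' - ((2:ℝ) ^ N - 1) * S ≤ u y :=
          ih j' c hc hmem' w' hw'lt
        -- the curve t ↦ Φ (j last) t y
        set γ : ℝ → (Fin n → ℝ) := fun t => Φ (j (Fin.last N)) t y with hγdef
        have hcurve : ∀ t : ℝ, compPt Φ j (Fin.snoc w' t : Fin (N+1) → ℝ) x' = γ t := by
          intro t
          rw [compPt_succ]
          have h1 : (Fin.snoc w' t : Fin (N+1) → ℝ) (Fin.last N) = t := by simp
          have h2 : (Fin.snoc w' t : Fin (N+1) → ℝ) ∘ Fin.castSucc = w' := by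
            funext k; simp
          rw [h1, h2]
        have hγprop : ∀ t ∈ Set.Ioo (-c) c,
            HasDerivAt γ (X (j (Fin.last N)) (γ t)) t ∧ γ t ∈ Metric.ball x₀ r := by
          intro t ht
          refine ⟨(hΦ _ _).2 t, ?_⟩
          rw [← hcurve t]
          apply hmem
          intro k
          induction k using Fin.lastCases with
          | last => simp [abs_lt]; exact ⟨ht.1, ht.2⟩
          | cast k => simpa using hw'lt k
        have hγ0 : γ 0 = y := (hΦ _ _).1
        have href := reflect X Ω u hu x₀ r hBΩ hbdd (j (Fin.last N)) γ c hc hγprop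
          (w (Fin.last N)) (Set.mem_Ioo.mpr (abs_lt.mp (hw (Fin.last N))))
        rw [hγ0] at href
        have harg : (Fin.snoc w' (w (Fin.last N)) : Fin (N+1) → ℝ) = w := by
          funext k
          induction k using Fin.lastCases with
          | last => simp
          | cast k => simp [hw']
        rw [← harg, hcurve]
        have h2N : (2:ℝ) ^ (N+1) = 2 * 2 ^ N := by ring
        rw [hSdef, h2N]
        rw [hSdef] at hyIH
        linarith [href, hyIH]
end

section
/- Let φ : S = A × (-τ, τ) → U ⊂ ℝⁿ be a diffeomorphism given by the flow of a smooth vector field X, i.e. φ(ω, t) = Φ^X(φ(ω,0), t), with Jacobian determinant J_φ > 0. Then div X(x) = (∂_t J_φ / J_φ)(φ⁻¹(x)) for all x ∈ U. -/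
open scoped Topology

namespace Stmt11Aux

/-- The determinant as a continuous multilinear map in the rows. -/
noncomputable def detCM (n : ℕ) : ContinuousMultilinearMap ℝ (fun _ : Fin n => (Fin n → ℝ)) ℝ :=
  { toMultilinearMap :=
      (Matrix.detRowAlternating : ((Fin n → ℝ) [⋀^Fin n]→ₗ[ℝ] ℝ)).toMultilinearMap
    cont := by
      show Continuous fun M : Matrix (Fin n) (Fin n) ℝ => M.det
      exact Continuous.matrix_det continuous_id }

/-- Jacobi's formula in the special case `A' = B * A`. -/
lemma jacobi {n : ℕ} (A : ℝ → (Fin n → Fin n → ℝ)) (A' : Fin n → Fin n → ℝ)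
    (B : Matrix (Fin n) (Fin n) ℝ) (t : ℝ) (hA : HasDerivAt A A' t)
    (hA' : ∀ i j, A' i j = ∑ k, B i k * A t k j) :
    HasDerivAt (fun s => (Matrix.of (A s)).det) (B.trace * (Matrix.of (A t)).det) t := by
  classical
  have hf : HasFDerivAt (detCM n) ((detCM n).linearDeriv (A t)) (A t) :=
    ContinuousMultilinearMap.hasFDerivAt _ _
  have h1 : HasDerivAt (fun s => detCM n (A s)) ((detCM n).linearDeriv (A t) A') t :=
    hf.comp_hasDerivAt t hA
  have key : (detCM n).linearDeriv (A t) A' = B.trace * (Matrix.of (A t)).det := by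
    rw [ContinuousMultilinearMap.linearDeriv_apply]
    have hterm : ∀ i, detCM n (Function.update (A t) i (A' i))
        = B i i * (Matrix.of (A t)).det := by
      intro i
      have hrow : A' i = ∑ k, B i k • (Matrix.of (A t)) k := by
        funext j
        simp [hA', Finset.sum_apply]
      show ((Matrix.of (A t)).updateRow i (A' i)).det = _
      rw [hrow, Matrix.det_updateRow_sum]
      simp [smul_eq_mul]
    calc ∑ i, detCM n (Function.update (A t) i (A' i))
        = ∑ i, B i i * (Matrix.of (A t)).det := by simp [hterm]
      _ = B.trace * (Matrix.of (A t)).det := by rw [Matrix.trace, Finset.sum_mul]; rfl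
  rw [key] at h1
  exact h1

/-- The curve `s ↦ update q 0 s` has derivative `Pi.single 0 1`. -/
lemma hasDerivAt_update {n : ℕ} [NeZero n] (q : Fin n → ℝ) (s₀ : ℝ) :
    HasDerivAt (fun s => Function.update q 0 s) (Pi.single 0 (1 : ℝ)) s₀ := by
  have heq : (fun s => Function.update q 0 s)
      = fun s => q + (s - q 0) • (Pi.single (0 : Fin n) (1 : ℝ) : Fin n → ℝ) := by
    funext s
    ext j
    by_cases hj : j = 0
    · subst hj; simp
    · simp [Function.update_apply, hj, Pi.single_apply, Ne.symm hj]
  rw [heq]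
  have h : HasDerivAt (fun s : ℝ => (s - q 0) • (Pi.single (0 : Fin n) (1 : ℝ) : Fin n → ℝ))
      ((1 : ℝ) • (Pi.single (0 : Fin n) (1 : ℝ) : Fin n → ℝ)) s₀ :=
    ((hasDerivAt_id s₀).sub_const (q 0)).smul_const _
  simpa using h.const_add q

end Stmt11Aux

/-- The divergence of a vector field on ℝⁿ: trace of its derivative. -/
noncomputable def divg {n : ℕ} (X : (Fin n → ℝ) → (Fin n → ℝ)) (x : Fin n → ℝ) : ℝ :=
  LinearMap.trace ℝ (Fin n → ℝ) (fderiv ℝ X x : (Fin n → ℝ) →ₗ[ℝ] (Fin n → ℝ))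

open Stmt11Aux in
/-- Liouville-type formula: in flow coordinates (time = coordinate `0`),
`div X = ∂_t J_φ / J_φ ∘ φ⁻¹`. -/
theorem stmt_11 (n : ℕ) [NeZero n]
    (X φ : (Fin n → ℝ) → (Fin n → ℝ)) (S : Set (Fin n → ℝ)) (hS : IsOpen S)
    (hX : ContDiff ℝ (⊤ : ℕ∞) X) (hφ : ContDiff ℝ (⊤ : ℕ∞) φ) (hinj : Set.InjOn φ S)
    (Jφ : (Fin n → ℝ) → ℝ) (hJ : ∀ p, Jφ p = (fderiv ℝ φ p).det)
    (hJpos : ∀ p ∈ S, 0 < Jφ p)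
    (hflow : ∀ p ∈ S,
      HasDerivAt (fun s => φ (Function.update p 0 s)) (X (φ p)) (p 0)) :
    ∀ p ∈ S, divg X (φ p) = deriv (fun s => Jφ (Function.update p 0 s)) (p 0) / Jφ p := by
  intro p hp
  classical
  set e0 : Fin n → ℝ := Pi.single 0 1 with he0
  have hφd : Differentiable ℝ φ := hφ.differentiable (by simp)
  have hXd : Differentiable ℝ X := hX.differentiable (by simp)
  set F : (Fin n → ℝ) → ((Fin n → ℝ) →L[ℝ] (Fin n → ℝ)) := fderiv ℝ φ with hF
  have hFc : ContDiff ℝ (⊤ : ℕ∞) F := hφ.fderiv_right (by simp)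
  have hFd : Differentiable ℝ F := hFc.differentiable (by simp)
  -- the derivative of `s ↦ g (update q 0 s)` at `q 0`
  have hcomp : ∀ {E : Type} [inst : NormedAddCommGroup E] [inst2 : NormedSpace ℝ E]
      (g : (Fin n → ℝ) → E) (q : Fin n → ℝ), DifferentiableAt ℝ g q →
      HasDerivAt (fun s => g (Function.update q 0 s)) (fderiv ℝ g q e0) (q 0) := by
    intro E _ _ g q hg
    have hq' : Function.update q 0 (q 0) = q := Function.update_eq_self _ _
    have hgf : HasFDerivAt g (fderiv ℝ g q) (Function.update q 0 (q 0)) := by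
      rw [hq']; exact hg.hasFDerivAt
    exact hgf.comp_hasDerivAt (q 0) (hasDerivAt_update q (q 0))
  -- Step A : F q e0 = X (φ q) on S
  have stepA : ∀ q ∈ S, F q e0 = X (φ q) := by
    intro q hq
    exact (hcomp φ q (hφd q)).unique (hflow q hq)
  -- evaluation map
  set ev : ((Fin n → ℝ) →L[ℝ] (Fin n → ℝ)) →L[ℝ] (Fin n → ℝ) :=
    ContinuousLinearMap.apply ℝ (Fin n → ℝ) e0 with hev
  -- Step B : fderiv of (fun q => F q e0) at p is (fderiv X (φ p)) ∘ (fderiv φ p)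
  have hGd : fderiv ℝ (fun q => F q e0) p = (fderiv ℝ X (φ p)).comp (F p) := by
    have hGX : (fun q => F q e0) =ᶠ[𝓝 p] (fun q => X (φ q)) := by
      filter_upwards [hS.mem_nhds hp] with q hq using stepA q hq
    rw [hGX.fderiv_eq]
    exact ((hXd (φ p)).hasFDerivAt.comp p (hφd p).hasFDerivAt).fderiv
  have hGd' : fderiv ℝ (fun q => F q e0) p = ev.comp (fderiv ℝ F p) := by
    have : HasFDerivAt (fun q => ev (F q)) (ev.comp (fderiv ℝ F p)) p :=
      ev.hasFDerivAt.comp p (hFd p).hasFDerivAt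
    exact this.fderiv
  -- Step C : symmetry of second derivative
  have hsymm : ∀ v, fderiv ℝ F p e0 v = fderiv ℝ F p v e0 := by
    intro v
    exact (hφ.contDiffAt.isSymmSndFDerivAt (by rw [minSmoothness_of_isRCLikeNormedField]; exact WithTop.coe_le_coe.mpr (le_top : (2 : ℕ∞) ≤ ⊤))).eq e0 v
  have stepC : fderiv ℝ F p e0 = (fderiv ℝ X (φ p)).comp (F p) := by
    ext v : 1
    calc fderiv ℝ F p e0 v = fderiv ℝ F p v e0 := hsymm v
      _ = fderiv ℝ (fun q => F q e0) p v := by rw [hGd']; rfl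
      _ = ((fderiv ℝ X (φ p)).comp (F p)) v := by rw [hGd]
  -- matrix picture : entries of a continuous linear map
  set T : ((Fin n → ℝ) →L[ℝ] (Fin n → ℝ)) →L[ℝ] (Fin n → Fin n → ℝ) :=
    ContinuousLinearMap.pi (fun i => ContinuousLinearMap.pi (fun j =>
      (ContinuousLinearMap.proj i).comp
        (ContinuousLinearMap.apply ℝ (Fin n → ℝ) (Pi.single j 1)))) with hT
  have hTapp : ∀ f : (Fin n → ℝ) →L[ℝ] (Fin n → ℝ),
      Matrix.of (T f) = LinearMap.toMatrix' (f : (Fin n → ℝ) →ₗ[ℝ] (Fin n → ℝ)) := by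
    intro f
    ext i j
    simp only [hT, Matrix.of_apply, ContinuousLinearMap.pi_apply, ContinuousLinearMap.comp_apply,
      ContinuousLinearMap.apply_apply, ContinuousLinearMap.proj_apply, LinearMap.toMatrix'_apply,
      ContinuousLinearMap.coe_coe]
  set A : ℝ → (Fin n → Fin n → ℝ) := fun s => T (F (Function.update p 0 s)) with hA
  set B : Matrix (Fin n) (Fin n) ℝ := Matrix.of (T (fderiv ℝ X (φ p))) with hB
  have hdetA : ∀ s, (Matrix.of (A s)).det = Jφ (Function.update p 0 s) := by
    intro s
    rw [hJ]
    show (Matrix.of (T (F (Function.update p 0 s)))).det = _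
    rw [hTapp, LinearMap.det_toMatrix']
  -- derivative of A
  have hAd : HasDerivAt A (T (fderiv ℝ F p e0)) (p 0) :=
    (T.hasFDerivAt).comp_hasDerivAt (p 0) (hcomp F p (hFd p))
  have hA'entries : ∀ i j, T (fderiv ℝ F p e0) i j = ∑ k, B i k * A (p 0) k j := by
    intro i j
    have h1 : Matrix.of (T (fderiv ℝ F p e0)) = B * Matrix.of (A (p 0)) := by
      rw [hTapp, stepC]
      have h2 : Matrix.of (A (p 0)) = Matrix.of (T (F p)) := by
        rw [hA]; simp only [Function.update_eq_self]
      rw [h2, hB, hTapp, hTapp, ContinuousLinearMap.toLinearMap_comp, LinearMap.toMatrix'_comp]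
    have := congrFun (congrFun h1 i) j
    simpa [Matrix.mul_apply] using this
  have hjac := jacobi A (T (fderiv ℝ F p e0)) B (p 0) hAd hA'entries
  have hderiv : deriv (fun s => Jφ (Function.update p 0 s)) (p 0)
      = B.trace * Jφ p := by
    have hfn : (fun s => Jφ (Function.update p 0 s)) = fun s => (Matrix.of (A s)).det := by
      funext s; rw [hdetA]
    rw [hfn, hjac.deriv, hdetA, Function.update_eq_self]
  -- divergence equals trace of B
  have hdiv : divg X (φ p) = B.trace := by
    rw [divg, LinearMap.trace_eq_matrix_trace ℝ (Pi.basisFun ℝ (Fin n)),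
      LinearMap.toMatrix_eq_toMatrix', ← hTapp, ← hB]
  rw [hdiv, hderiv]
  field_simp [(hJpos p hp).ne']
end
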